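/- arXiv:2301.06009 — 2 statements merged into one kernel-verified Lean document; each statement's English description precedes it below -/
import Mathlib

section
/- Fix real numbers ε, δ with 0 < ε < 1/4 and 0 < δ < 1, an integer N, and indices k, n with 2 ≤ k, k + 2 ≤ n and n + 1 ≤ N. Let m^A and m^B be mask sequences in [0,1]^{N+1} (indexed 0,…,N) that agree at every position except k and n, where m^A_k < ε, m^A_n > 1−ε, m^B_k > 1−ε, m^B_n < ε, and whose shared coordinates satisfy m_{k−1} > 1−ε, m_{k+1} > 1−ε, m_{n−1} > 1−ε, and m_{n+1} < ε. Assume p_k(m^B_k) ≥ δ, p_{k+1}(m_{k+1}) ≥ δ, p_n(m^A_n) ≥ δ; assume the masked-token log-probabilities are pairwise within ε of each other, i.e. |log p_k(m^A_k) − log p_n(m^B_n)| < ε, |log p_k(m^A_k) − log p_{n+1}(m_{n+1})| < ε, and |log p_n(m^B_n) − log p_{n+1}(m_{n+1})| < ε; and assume (1 − 3ε)·(−log p_k(m^A_k)) > 2·(−log δ) + 2ε. Then L_lm(m^B) < L_lm(m^A); that is, the configuration in which the selected positions are consecutive (selected at k, unselected at n) attains a strictly smaller regularizer value than the configuration with a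 hole at k and an isolated selection at n. -/
open Real Finset

/-- The language-model regularizer `L_lm(m) = −∑_{i=1}^N m_{i−1} · log p_i(m_i)`. -/
noncomputable def Llm (N : ℕ) (p : ℕ → ℝ → ℝ) (m : ℕ → ℝ) : ℝ :=
  -∑ i ∈ Finset.Icc 1 N, m (i - 1) * Real.log (p i (m i))

/-- Pure-arithmetic core of Theorem 1. -/
lemma llm_arith (ε m1 ak bk m2 an bn la lb lc lBk lk1 lAn ld : ℝ)
    (hε0 : 0 < ε) (hε : ε < 1/4)
    (hld : ld < 0)
    (hm1l : m1 > 1 - ε) (hm10 : 0 ≤ m1)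
    (hak0 : 0 ≤ ak) (hbku : bk ≤ 1)
    (hm2u : m2 ≤ 1) (hm20 : 0 ≤ m2)
    (hanl : an > 1 - ε)
    (hbnu : bn < ε)
    (hla : la ≤ 0) (hlb : lb ≤ 0) (hlc : lc ≤ 0)
    (hlBk2 : ld ≤ lBk)
    (hlk11 : lk1 ≤ 0) (hlk12 : ld ≤ lk1)
    (hlAn1 : lAn ≤ 0)
    (hc1 : |la - lb| < ε) (hc2 : |la - lc| < ε)
    (hbig : (1 - 3 * ε) * (-la) > 2 * (-ld) + 2 * ε) :
    (m1 * la - m1 * lBk) + (ak * lk1 - bk * lk1) + (m2 * lAn - m2 * lb)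
      + (an * lc - bn * lc) < 0 := by
  obtain ⟨hc1a, hc1b⟩ := abs_lt.mp hc1
  obtain ⟨hc2a, hc2b⟩ := abs_lt.mp hc2
  have hmla : ε * la ≤ 0 := mul_nonpos_of_nonneg_of_nonpos hε0.le hla
  have hmld : ε * ld ≤ 0 := mul_nonpos_of_nonneg_of_nonpos hε0.le hld.le
  have hεsq : 0 < ε * ε := mul_pos hε0 hε0
  have hlad : la - ld < 0 := by linarith
  have t1 : m1 * la - m1 * lBk ≤ (1 - ε) * la - ld := by
    have h1 : 0 ≤ m1 * (lBk - ld) := mul_nonneg hm10 (by linarith)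
    have h2 : 0 ≤ (m1 - (1 - ε)) * (ld - la) :=
      mul_nonneg (by linarith) (by linarith)
    linarith
  have t2 : ak * lk1 - bk * lk1 ≤ -ld := by
    have h1 : (ak - bk + 1) * lk1 ≤ 0 :=
      mul_nonpos_of_nonneg_of_nonpos (by linarith) hlk11
    linarith
  have t3 : m2 * lAn - m2 * lb ≤ -lb := by
    have h1 : m2 * lAn ≤ 0 := mul_nonpos_of_nonneg_of_nonpos hm20 hlAn1
    have h2 : 0 ≤ (1 - m2) * (-lb) := mul_nonneg (by linarith) (by linarith)
    linarith
  have t4 : an * lc - bn * lc ≤ (1 - 2 * ε) * lc := by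
    have h1 : (an - bn - (1 - 2 * ε)) * lc ≤ 0 :=
      mul_nonpos_of_nonneg_of_nonpos (by linarith) hlc
    linarith
  have final : (1 - ε) * la - ld + (-ld) + (-lb) + (1 - 2 * ε) * lc < 0 := by
    have h4 : 0 ≤ (1 - 2 * ε) * (la + ε - lc) :=
      mul_nonneg (by linarith) (by linarith)
    linarith
  linarith

/-- Theorem 1, inequality (1): with a fixed number of selected tokens, the configuration
in which the selected positions are consecutive (selected at `k`, unselected at `n`)
attains a strictly smaller regularizer value than the configuration with a hole at `k`
and an isolated selection at `n`. -/
theorem llm_consecutive_lt_hole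
    (ε δ : ℝ) (hε0 : 0 < ε) (hε : ε < 1/4) (hδ0 : 0 < δ) (hδ1 : δ < 1)
    (N k n : ℕ) (hk : 2 ≤ k) (hkn : k + 2 ≤ n) (hnN : n + 1 ≤ N)
    (p : ℕ → ℝ → ℝ)
    (hp : ∀ i, 1 ≤ i → i ≤ N → ∀ t : ℝ, 0 < p i t ∧ p i t ≤ 1)
    (mA mB : ℕ → ℝ)
    (hmA01 : ∀ i, i ≤ N → 0 ≤ mA i ∧ mA i ≤ 1)
    (hmB01 : ∀ i, i ≤ N → 0 ≤ mB i ∧ mB i ≤ 1)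
    (hagree : ∀ i, i ≠ k → i ≠ n → mA i = mB i)
    (hAk : mA k < ε) (hAn : mA n > 1 - ε)
    (hBk : mB k > 1 - ε) (hBn : mB n < ε)
    (hkm1 : mA (k - 1) > 1 - ε) (hkp1 : mA (k + 1) > 1 - ε)
    (hnm1 : mA (n - 1) > 1 - ε) (hnp1 : mA (n + 1) < ε)
    (hδk : p k (mB k) ≥ δ) (hδk1 : p (k + 1) (mA (k + 1)) ≥ δ)
    (hδn : p n (mA n) ≥ δ)
    (hclose1 : |Real.log (p k (mA k)) - Real.log (p n (mB n))| < ε)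
    (hclose2 : |Real.log (p k (mA k)) - Real.log (p (n + 1) (mA (n + 1)))| < ε)
    (hclose3 : |Real.log (p n (mB n)) - Real.log (p (n + 1) (mA (n + 1)))| < ε)
    (hbig : (1 - 3 * ε) * (-Real.log (p k (mA k))) > 2 * (-Real.log δ) + 2 * ε) :
    Llm N p mB < Llm N p mA := by
  set f : ℕ → ℝ := fun i =>
    mA (i - 1) * Real.log (p i (mA i)) - mB (i - 1) * Real.log (p i (mB i)) with hf
  have hdiff : Llm N p mB - Llm N p mA = ∑ i ∈ Finset.Icc 1 N, f i := by
    simp only [Llm, hf, Finset.sum_sub_distrib]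
    ring
  set s : Finset ℕ := insert k (insert (k + 1) (insert n {n + 1})) with hs
  have hsub : s ⊆ Finset.Icc 1 N := by
    intro i hi
    simp only [hs, Finset.mem_insert, Finset.mem_singleton] at hi
    simp only [Finset.mem_Icc]
    omega
  have hzero : ∀ i ∈ Finset.Icc 1 N, i ∉ s → f i = 0 := by
    intro i hi his
    simp only [hs, Finset.mem_insert, Finset.mem_singleton, not_or] at his
    obtain ⟨h1, h2, h3, h4⟩ := his
    have e1 : mA i = mB i := hagree i h1 h3
    have e2 : mA (i - 1) = mB (i - 1) := hagree (i - 1) (by omega) (by omega)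
    simp [hf, e1, e2]
  have hsum4 : ∑ i ∈ Finset.Icc 1 N, f i = f k + f (k + 1) + f n + f (n + 1) := by
    rw [← Finset.sum_subset hsub hzero]
    have h1 : k ∉ (insert (k + 1) (insert n {n + 1}) : Finset ℕ) := by simp; omega
    have h2 : k + 1 ∉ (insert n {n + 1} : Finset ℕ) := by simp; omega
    have h3 : n ∉ ({n + 1} : Finset ℕ) := by simp
    rw [hs, Finset.sum_insert h1, Finset.sum_insert h2, Finset.sum_insert h3,
      Finset.sum_singleton]
    ring
  -- agreements at shared coordinates
  have e1 : mB (k - 1) = mA (k - 1) := (hagree (k - 1) (by omega) (by omega)).symm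
  have e2 : mB (k + 1) = mA (k + 1) := (hagree (k + 1) (by omega) (by omega)).symm
  have e3 : mB (n - 1) = mA (n - 1) := (hagree (n - 1) (by omega) (by omega)).symm
  have e4 : mB (n + 1) = mA (n + 1) := (hagree (n + 1) (by omega) (by omega)).symm
  have hk1 : k + 1 - 1 = k := by omega
  have hn1 : n + 1 - 1 = n := by omega
  have hfk : f k = mA (k - 1) * Real.log (p k (mA k))
      - mA (k - 1) * Real.log (p k (mB k)) := by simp [hf, e1]
  have hfk1 : f (k + 1) = mA k * Real.log (p (k + 1) (mA (k + 1)))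
      - mB k * Real.log (p (k + 1) (mA (k + 1))) := by simp [hf, hk1, e2]
  have hfn : f n = mA (n - 1) * Real.log (p n (mA n))
      - mA (n - 1) * Real.log (p n (mB n)) := by simp [hf, e3]
  have hfn1 : f (n + 1) = mA n * Real.log (p (n + 1) (mA (n + 1)))
      - mB n * Real.log (p (n + 1) (mA (n + 1))) := by simp [hf, hn1, e4]
  -- basic facts about logs
  have hld : Real.log δ < 0 := Real.log_neg hδ0 hδ1
  have hpk := hp k (by omega) (by omega)
  have hpk1 := hp (k + 1) (by omega) (by omega)
  have hpn := hp n (by omega) (by omega)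
  have hpn1 := hp (n + 1) (by omega) (by omega)
  have hla : Real.log (p k (mA k)) ≤ 0 :=
    Real.log_nonpos (le_of_lt (hpk (mA k)).1) (hpk (mA k)).2
  have hlb : Real.log (p n (mB n)) ≤ 0 :=
    Real.log_nonpos (le_of_lt (hpn (mB n)).1) (hpn (mB n)).2
  have hlc : Real.log (p (n + 1) (mA (n + 1))) ≤ 0 :=
    Real.log_nonpos (le_of_lt (hpn1 (mA (n + 1))).1) (hpn1 (mA (n + 1))).2
  have hlBk1 : Real.log (p k (mB k)) ≤ 0 :=
    Real.log_nonpos (le_of_lt (hpk (mB k)).1) (hpk (mB k)).2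
  have hlBk2 : Real.log δ ≤ Real.log (p k (mB k)) := Real.log_le_log hδ0 hδk
  have hlk11 : Real.log (p (k + 1) (mA (k + 1))) ≤ 0 :=
    Real.log_nonpos (le_of_lt (hpk1 (mA (k + 1))).1) (hpk1 (mA (k + 1))).2
  have hlk12 : Real.log δ ≤ Real.log (p (k + 1) (mA (k + 1))) := Real.log_le_log hδ0 hδk1
  have hlAn1 : Real.log (p n (mA n)) ≤ 0 :=
    Real.log_nonpos (le_of_lt (hpn (mA n)).1) (hpn (mA n)).2
  -- mask bounds
  have hm1 := hmA01 (k - 1) (by omega)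
  have hmak := hmA01 k (by omega)
  have hmbk := hmB01 k (by omega)
  have hm2 := hmA01 (n - 1) (by omega)
  have hman := hmA01 n (by omega)
  have hmbn := hmB01 n (by omega)
  have key : f k + f (k + 1) + f n + f (n + 1) < 0 := by
    rw [hfk, hfk1, hfn, hfn1]
    exact llm_arith ε (mA (k - 1)) (mA k) (mB k) (mA (n - 1)) (mA n) (mB n)
      (Real.log (p k (mA k))) (Real.log (p n (mB n)))
      (Real.log (p (n + 1) (mA (n + 1)))) (Real.log (p k (mB k)))
      (Real.log (p (k + 1) (mA (k + 1)))) (Real.log (p n (mA n))) (Real.log δ)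
      hε0 hε hld hkm1 hm1.1 hmak.1 hmbk.2 hm2.2 hm2.1 hAn hBn
      hla hlb hlc hlBk2 hlk11 hlk12 hlAn1 hclose1 hclose2 hbig
  linarith [hdiff, hsum4, key, hdiff ▸ hsum4]
end

section
/- Fix real numbers ε, δ with 0 < ε < 1/2 and 0 < δ < 1, an integer N, and an index k with 3 ≤ k ≤ N−1. Consider the language-model regularizer with no term for the first token, L_lm(m) = −∑_{i=2}^N m_{i−1} · log p_i(m_i). Let m^C and m^D be mask sequences in [0,1]^N (indexed 1,…,N) that agree at every position except 1 and k, where m^C_1 > 1−ε, m^C_k < ε, m^D_1 < ε, m^D_k > 1−ε, and whose shared coordinates satisfy m_i > 1−ε for i = 2,…,k−1 and m_{k+1} > 1−ε. Assume p_2(m_2) ≥ δ, p_k(m^D_k) ≥ δ, p_{k+1}(m_{k+1}) ≥ δ, and (1 − ε)·(−log p_k(m^C_k)) > 2·(−log δ). Then L_lm(m^C) > L_lm(m^D); that is, a gap placed at the very beginning of the sequence (configuration m^D) attains a strictly smaller regularizer value than a gap placed in the middle at position k (configuration m^C). -/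
open Real Finset

/-- The language-model regularizer with no term for the first token:
`L_lm(m) = −∑_{i=2}^N m_{i−1} · log p_i(m_i)`. -/
noncomputable def Llm2 (N : ℕ) (p : ℕ → ℝ → ℝ) (m : ℕ → ℝ) : ℝ :=
  -∑ i ∈ Finset.Icc 2 N, m (i - 1) * Real.log (p i (m i))

/-- Theorem 1, inequality (2): a gap placed at the very beginning of the sequence
(configuration `m^D`) attains a strictly smaller regularizer value than a gap placed
in the middle at position `k` (configuration `m^C`). -/
theorem llm_gap_at_start_lt_gap_in_middle
    (ε δ : ℝ) (hε0 : 0 < ε) (hε : ε < 1/2) (hδ0 : 0 < δ) (hδ1 : δ < 1)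
    (N k : ℕ) (hk3 : 3 ≤ k) (hkN : k ≤ N - 1) (hN : k + 1 ≤ N)
    (p : ℕ → ℝ → ℝ)
    (hp : ∀ i, 2 ≤ i → i ≤ N → ∀ t : ℝ, 0 < p i t ∧ p i t ≤ 1)
    (mC mD : ℕ → ℝ)
    (hmC01 : ∀ i, 1 ≤ i → i ≤ N → 0 ≤ mC i ∧ mC i ≤ 1)
    (hmD01 : ∀ i, 1 ≤ i → i ≤ N → 0 ≤ mD i ∧ mD i ≤ 1)
    (hagree : ∀ i, i ≠ 1 → i ≠ k → mC i = mD i)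
    (hC1 : mC 1 > 1 - ε) (hCk : mC k < ε)
    (hD1 : mD 1 < ε) (hDk : mD k > 1 - ε)
    (hshared : ∀ i, 2 ≤ i → i ≤ k - 1 → mC i > 1 - ε)
    (hkp1 : mC (k + 1) > 1 - ε)
    (hδ2 : p 2 (mC 2) ≥ δ) (hδk : p k (mD k) ≥ δ)
    (hδk1 : p (k + 1) (mC (k + 1)) ≥ δ)
    (hbig : (1 - ε) * (-Real.log (p k (mC k))) > 2 * (-Real.log δ)) :
    Llm2 N p mC > Llm2 N p mD := by
  have hkN' : k ≤ N := Nat.le_of_succ_le hN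
  set g : ℕ → ℝ := fun i =>
    mD (i - 1) * Real.log (p i (mD i)) - mC (i - 1) * Real.log (p i (mC i)) with hg
  have hsub : ({2, k, k + 1} : Finset ℕ) ⊆ Finset.Icc 2 N := by
    intro i hi
    simp only [Finset.mem_insert, Finset.mem_singleton] at hi
    simp only [Finset.mem_Icc]
    omega
  have hzero : ∀ i ∈ Finset.Icc 2 N, i ∉ ({2, k, k + 1} : Finset ℕ) → g i = 0 := by
    intro i hi hni
    simp only [Finset.mem_Icc] at hi
    simp only [Finset.mem_insert, Finset.mem_singleton, not_or] at hni
    obtain ⟨h2, hk', hk1⟩ := hni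
    have e1 : mC i = mD i := hagree i (by omega) hk'
    have e2 : mC (i - 1) = mD (i - 1) := hagree (i - 1) (by omega) (by omega)
    simp only [hg, e1, e2]
    ring
  have hsum : ∑ i ∈ Finset.Icc 2 N, g i = g 2 + g k + g (k + 1) := by
    rw [← Finset.sum_subset hsub hzero]
    rw [Finset.sum_insert (by simp only [Finset.mem_insert, Finset.mem_singleton]; omega),
      Finset.sum_insert (by simp only [Finset.mem_singleton]; omega),
      Finset.sum_singleton]
    ring
  -- abbreviations and basic facts
  have hsδ : Real.log δ < 0 := Real.log_neg hδ0 hδ1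
  have hlog_nonpos : ∀ i, 2 ≤ i → i ≤ N → ∀ t : ℝ, Real.log (p i t) ≤ 0 := fun i h1 h2 t =>
    Real.log_nonpos (le_of_lt (hp i h1 h2 t).1) (hp i h1 h2 t).2
  have hlogδ : ∀ i, 2 ≤ i → i ≤ N → ∀ t : ℝ, δ ≤ p i t → Real.log δ ≤ Real.log (p i t) :=
    fun i h1 h2 t ht => Real.log_le_log hδ0 ht
  -- equalities of shared coordinates
  have e2 : mD 2 = mC 2 := (hagree 2 (by omega) (by omega)).symm
  have ekm : mD (k - 1) = mC (k - 1) := (hagree (k - 1) (by omega) (by omega)).symm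
  have ek1 : mD (k + 1) = mC (k + 1) := (hagree (k + 1) (by omega) (by omega)).symm
  have hk1sub : k + 1 - 1 = k := by omega
  -- g 2
  have hg2 : g 2 = (mD 1 - mC 1) * Real.log (p 2 (mC 2)) := by
    simp only [hg, e2]; norm_num; ring
  have hg2pos : g 2 ≥ 0 := by
    rw [hg2]
    have h1 : mD 1 - mC 1 ≤ 0 := by nlinarith
    have h2 : Real.log (p 2 (mC 2)) ≤ 0 := hlog_nonpos 2 (by omega) (by omega) _
    nlinarith [mul_nonneg (neg_nonneg.2 h1) (neg_nonneg.2 h2)]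
  -- g k
  have hc01 : 0 ≤ mC (k - 1) ∧ mC (k - 1) ≤ 1 := hmC01 (k - 1) (by omega) (by omega)
  have hcε : mC (k - 1) > 1 - ε := hshared (k - 1) (by omega) (by omega)
  have hgk : g k = mC (k - 1) * Real.log (p k (mD k)) +
      mC (k - 1) * (-Real.log (p k (mC k))) := by
    simp only [hg, ekm]; ring
  have hLDk : Real.log δ ≤ Real.log (p k (mD k)) := hlogδ k (by omega) hkN' _ hδk
  have hLDk0 : Real.log (p k (mD k)) ≤ 0 := hlog_nonpos k (by omega) hkN' _
  have hLc0 : 0 < -Real.log (p k (mC k)) := by nlinarith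
  have hgk_lb : g k > Real.log δ + 2 * (-Real.log δ) := by
    rw [hgk]
    have h1 : mC (k - 1) * Real.log (p k (mD k)) ≥ Real.log δ := by
      have := mul_le_mul_of_nonpos_right hc01.2 hLDk0
      linarith
    have h2 : mC (k - 1) * (-Real.log (p k (mC k))) > 2 * (-Real.log δ) := by
      have := mul_lt_mul_of_pos_right hcε hLc0
      linarith
    linarith
  -- g (k+1)
  have hgk1 : g (k + 1) = (mD k - mC k) * Real.log (p (k + 1) (mC (k + 1))) := by
    simp only [hg, ek1, hk1sub]; ring
  have hCk0 : 0 ≤ mC k := (hmC01 k (by omega) hkN').1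
  have hDk1 : mD k ≤ 1 := (hmD01 k (by omega) hkN').2
  have hgk1_lb : g (k + 1) ≥ Real.log δ := by
    rw [hgk1]
    have hL0 : Real.log (p (k + 1) (mC (k + 1))) ≤ 0 := hlog_nonpos (k + 1) (by omega) hN _
    have hL : Real.log δ ≤ Real.log (p (k + 1) (mC (k + 1))) := hlogδ (k + 1) (by omega) hN _ hδk1
    have hle1 : mD k - mC k ≤ 1 := by linarith
    have := mul_le_mul_of_nonpos_right hle1 hL0
    linarith
  -- conclusion
  have hdiff : Llm2 N p mC - Llm2 N p mD = ∑ i ∈ Finset.Icc 2 N, g i := by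
    simp only [Llm2, hg, Finset.sum_sub_distrib]
    ring
  have : g 2 + g k + g (k + 1) > 0 := by linarith
  rw [hsum] at hdiff
  linarith
end
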